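/- (Fluid nonabandoning queue-length formula.) Let ϑ ∈ I, let ζ be the unique fluid model solution with initial measure ϑ, let w be the unique workload fluid model solution with w(0) = w_ϑ, define τ(t) = inf{s ∈ [0,t] : w(s) + s ≥ t}, and let U = {(a,p) ∈ [0,∞)² : a < p}. Then for each 1 ≤ k ≤ K: if 0 ≤ t < w(0), then ζ_k(t)(U) = ϑ_k(U_t) + λ_k ∫_0^t G_k(w(v)) dv; and if t ≥ w(0), then ζ_k(t)(U) = λ_k ∫_{τ(t)}^t G_k(w(v)) dv. -/

import Mathlib

open MeasureTheory Set Filter Topology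
open scoped ENNReal

noncomputable section

namespace OverloadedFIFO

/-- The complement `G(x) = Γ((x, ∞))` of the cumulative distribution function of `Γ`. -/
def Gk (Γ : MeasureTheory.Measure ℝ) (x : ℝ) : ℝ := (Γ (Set.Ioi x)).toReal

/-- Model data: `K` job classes with arrival rates `lam`, service rates `mu`, and
deadline (patience) distributions `Γ`, in the overloaded regime `ρ > 1`.  Each `Γ k` is a
Borel probability measure on `[0,∞)` (no mass on negatives), with continuous c.d.f.
(no atoms, in particular `Γ k {0} = 0`) and finite mean. -/
structure Data (K : ℕ) where
  lam : Fin K → ℝ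
  mu : Fin K → ℝ
  Γ : Fin K → MeasureTheory.Measure ℝ
  lam_pos : ∀ k, 0 < lam k
  mu_pos : ∀ k, 0 < mu k
  Γ_prob : ∀ k, MeasureTheory.IsProbabilityMeasure (Γ k)
  Γ_null_neg : ∀ k, Γ k (Set.Iio 0) = 0
  Γ_noAtom : ∀ k, ∀ x : ℝ, Γ k {x} = 0
  Γ_finite_mean : ∀ k, MeasureTheory.Integrable id (Γ k)
  rho_gt_one : 1 < ∑ k, lam k / mu k

instance {K : ℕ} (D : Data K) (k : Fin K) : IsProbabilityMeasure (D.Γ k) := D.Γ_prob k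

/-- `ρ_k = λ_k / μ_k`. -/
def Data.rho {K : ℕ} (D : Data K) (k : Fin K) : ℝ := D.lam k / D.mu k

/-- `ρ = Σ_k ρ_k`. -/
def Data.rhoTot {K : ℕ} (D : Data K) : ℝ := ∑ k, D.rho k

/-- A workload fluid model solution: a nonnegative function `w` on `[0,∞)` satisfying
`w(t) = w(0) + Σ_k ρ_k ∫_0^t G_k(w(s)) ds − t` for all `t ≥ 0`. -/
def IsWorkloadSol {K : ℕ} (D : Data K) (w : ℝ → ℝ) : Prop :=
  (∀ t : ℝ, 0 ≤ t → 0 ≤ w t) ∧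
  (∀ k : Fin K, ∀ t : ℝ, 0 ≤ t →
    IntervalIntegrable (fun s => Gk (D.Γ k) (w s)) volume 0 t) ∧
  (∀ t : ℝ, 0 ≤ t →
    w t = w 0 + (∑ k, D.rho k * ∫ s in (0:ℝ)..t, Gk (D.Γ k) (w s)) - t)

/-- `w_l = sup {u ≥ 0 : Σ_k ρ_k G_k(u) > 1}`. -/
def wl {K : ℕ} (D : Data K) : ℝ :=
  sSup {u : ℝ | 0 ≤ u ∧ 1 < ∑ k, D.rho k * Gk (D.Γ k) u}

/-- `w_u = sup {u ≥ 0 : Σ_k ρ_k G_k(u) ≥ 1}`. -/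
def wu {K : ℕ} (D : Data K) : ℝ :=
  sSup {u : ℝ | 0 ≤ u ∧ 1 ≤ ∑ k, D.rho k * Gk (D.Γ k) u}

/-- `d_max = max_k sup {x ≥ 0 : G_k(x) > 0} ∈ (0,∞]`, as an extended nonnegative real. -/
def dmax {K : ℕ} (D : Data K) : ℝ≥0∞ :=
  ⨆ k, sSup (ENNReal.ofReal '' {x : ℝ | 0 ≤ x ∧ 0 < Gk (D.Γ k) x})

/-- `τ(t) = inf {s ∈ [0,t] : w(s) + s ≥ t}`. -/
def tauF (w : ℝ → ℝ) (t : ℝ) : ℝ := sInf {s : ℝ | 0 ≤ s ∧ s ≤ t ∧ t ≤ w s + s}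

/-- The nonnegative quadrant `[0,∞)²`. -/
def Q : Set (ℝ × ℝ) := {p | 0 ≤ p.1 ∧ 0 ≤ p.2}

/-- The shift `B_x = {y ∈ [0,∞)² : y − x ∈ B}` of a set `B ⊆ [0,∞)²`. -/
def shift (B : Set (ℝ × ℝ)) (x : ℝ × ℝ) : Set (ℝ × ℝ) :=
  {y | y ∈ Q ∧ (y.1 - x.1, y.2 - x.2) ∈ B}

/-- Diagonal shift `B_t = B_{(t,t)}`. -/
def shiftd (B : Set (ℝ × ℝ)) (t : ℝ) : Set (ℝ × ℝ) := shift B (t, t)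

/-- The set `C = ([0,∞)×{0}) ∪ ({0}×[0,∞))`. -/
def Cset : Set (ℝ × ℝ) := {p | (0 ≤ p.1 ∧ p.2 = 0) ∨ (p.1 = 0 ∧ 0 ≤ p.2)}

/-- The `κ`-enlargement `B^κ = {x ∈ [0,∞)² : inf_{y ∈ B} ‖x−y‖ < κ}` (Euclidean norm). -/
def enlarge (B : Set (ℝ × ℝ)) (κ : ℝ) : Set (ℝ × ℝ) :=
  {x | x ∈ Q ∧ ∃ y ∈ B, Real.sqrt ((x.1 - y.1) ^ 2 + (x.2 - y.2) ^ 2) < κ}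

/-- `w_ϑ = sup {x ≥ 0 : ϑ_+([x,∞)×[0,∞)) > 0}` for a `K`-tuple `ϑ` of measures on `[0,∞)²`. -/
def wMeas {K : ℕ} (ϑ : Fin K → MeasureTheory.Measure (ℝ × ℝ)) : ℝ :=
  sSup {x : ℝ | 0 ≤ x ∧ 0 < ∑ k, ϑ k (Set.Ici x ×ˢ Set.Ici (0:ℝ))}

/-- Membership in the set `I` of admissible initial measures: each `ϑ k` is a finite Borel
measure on `[0,∞)²`; (I.1) the superposition charges no corner set `C_x`, `x ∈ [0,∞)²`;
(I.2) `w_ϑ < ∞`; (I.3) `max_k G_k(w_ϑ − ε) > 0` for every `ε > 0`. -/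
def MemI {K : ℕ} (D : Data K) (ϑ : Fin K → MeasureTheory.Measure (ℝ × ℝ)) : Prop :=
  (∀ k, IsFiniteMeasure (ϑ k)) ∧
  (∀ k, ϑ k Qᶜ = 0) ∧
  (∀ x ∈ Q, (∑ k, ϑ k (shift Cset x)) = 0) ∧
  BddAbove {x : ℝ | 0 ≤ x ∧ 0 < ∑ k, ϑ k (Set.Ici x ×ˢ Set.Ici (0:ℝ))} ∧
  (∀ ε : ℝ, 0 < ε → ∃ k, 0 < Gk (D.Γ k) (wMeas ϑ - ε))

/-- `δ⁺_w`: the Dirac measure at `w` if `w > 0`, and the zero measure otherwise. -/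
def deltaPlus (w : ℝ) : MeasureTheory.Measure ℝ :=
  if 0 < w then MeasureTheory.Measure.dirac w else 0

instance (w : ℝ) : SFinite (deltaPlus w) := by
  unfold deltaPlus; split_ifs <;> infer_instance

/-- `(δ⁺_w × Γ)(B)`, as a real number. -/
def kern (Γ : MeasureTheory.Measure ℝ) (w : ℝ) (B : Set (ℝ × ℝ)) : ℝ :=
  (((deltaPlus w).prod Γ) B).toReal

/-- A (measure-valued) fluid model solution with initial measure `ϑ`: a family
`ζ(t) = (ζ_1(t),…,ζ_K(t))` of finite Borel measures on `[0,∞)²` with `ζ(0) = ϑ` satisfying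
`ζ_k(t)(B) = ϑ_k(B_t) + λ_k ∫_0^t (δ⁺_{w(s)} × Γ_k)(B_{t−s}) ds` for every Borel
`B ⊆ [0,∞)²` and `t ≥ 0`, where `w` is the (unique) workload fluid model solution with
`w(0) = w_ϑ`. -/
def IsFluidSol {K : ℕ} (D : Data K) (ϑ : Fin K → MeasureTheory.Measure (ℝ × ℝ))
    (ζ : ℝ → Fin K → MeasureTheory.Measure (ℝ × ℝ)) : Prop :=
  ∃ w : ℝ → ℝ, IsWorkloadSol D w ∧ w 0 = wMeas ϑ ∧
    (∀ t : ℝ, 0 ≤ t → ∀ k, IsFiniteMeasure (ζ t k) ∧ ζ t k Qᶜ = 0) ∧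
    (∀ k, ζ 0 k = ϑ k) ∧
    (∀ k, ∀ B : Set (ℝ × ℝ), B ⊆ Q → MeasurableSet B → ∀ t : ℝ, 0 ≤ t →
      IntervalIntegrable (fun s => kern (D.Γ k) (w s) (shiftd B (t - s))) volume 0 t ∧
      ζ t k B = ϑ k (shiftd B t) +
        ENNReal.ofReal (D.lam k * ∫ s in (0:ℝ)..t, kern (D.Γ k) (w s) (shiftd B (t - s))))

/-- The candidate invariant state `θ^w`:
`θ^w_k(B) = λ_k ∫_0^w Γ_k({p ≥ u : (w−u, p−u) ∈ B}) du`. -/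
def thetaW {K : ℕ} (D : Data K) (w : ℝ) (k : Fin K) : MeasureTheory.Measure (ℝ × ℝ) :=
  ENNReal.ofReal (D.lam k) •
    MeasureTheory.Measure.map (fun up : ℝ × ℝ => (w - up.1, up.2 - up.1))
      ((((MeasureTheory.volume.restrict (Set.Ioo (0:ℝ) w))).prod (D.Γ k)).restrict
        {up : ℝ × ℝ | up.1 ≤ up.2})

/-!
A class-`k` job arriving at time `s` with patience `p` sits, at time `t`, at the point
`(w(s) - (t - s), p - (t - s))`, since its waiting time `w(s)` runs down and so does its patience.
It lies in the queue region `U` exactly when `t - s ≤ w(s) < p`, so the arrival integrand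
`(δ⁺_{w(s)} × Γ_k)(U_{t-s})` equals `G_k(w(s))` when `s + w(s) ≥ t` and vanishes otherwise.
The map `s ↦ s + w(s)` is nondecreasing (its increments are `Σ ρ_k ∫ G_k(w) ≥ 0`), so up to an
endpoint the arrivals still queued at time `t` are those of `[τ(t), t]`, and `τ(t) = 0` for
`t ≤ w(0)`. For `t ≥ w(0) = w_ϑ` the initial term `ϑ_k(U_t)` vanishes: `ϑ_k` does not charge
`(w_ϑ, ∞) × [0, ∞)` by definition of `w_ϑ`, nor the line `{t} × [0, ∞)` by (I.1).
Identifying the workload of the fluid solution with `w` uses uniqueness of workload solutions,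
which follows from the comparison principle: where `w₁ > w₂`, `G_k(w₁) ≤ G_k(w₂)`.
-/

lemma Gk_nonneg (Γ : Measure ℝ) (x : ℝ) : 0 ≤ Gk Γ x := ENNReal.toReal_nonneg

lemma Gk_antitone (Γ : Measure ℝ) [IsFiniteMeasure Γ] : Antitone (Gk Γ) := fun _ _ hab =>
  ENNReal.toReal_mono (measure_ne_top _ _) (measure_mono (Ioi_subset_Ioi hab))

lemma Data.rho_nonneg {K : ℕ} (D : Data K) (k : Fin K) : 0 ≤ D.rho k :=
  div_nonneg (D.lam_pos k).le (D.mu_pos k).le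

lemma ContinuousOn.nonpos_of_le_on_pos_stretches {d : ℝ → ℝ} {T : ℝ}
    (hd : ContinuousOn d (Icc 0 T)) (h0 : d 0 ≤ 0)
    (hdec : ∀ a b, 0 ≤ a → a ≤ b → b ≤ T → (∀ s ∈ Ioc a b, 0 < d s) → d b ≤ d a) :
    ∀ t ∈ Icc 0 T, d t ≤ 0 := by
  intro t ht
  by_contra! hpos
  set S := Icc 0 t ∩ d ⁻¹' Iic 0
  have hSclosed : IsClosed S :=
    (hd.mono (Icc_subset_Icc le_rfl ht.2)).preimage_isClosed_of_isClosed isClosed_Icc isClosed_Iic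
  have hSbdd : BddAbove S := ⟨t, fun s hs => hs.1.2⟩
  have hlast : sSup S ∈ S := hSclosed.csSup_mem ⟨0, ⟨le_rfl, ht.1⟩, h0⟩ hSbdd
  have hpos_after : ∀ s ∈ Ioc (sSup S) t, 0 < d s := fun s hs => by
    by_contra! hle
    exact (le_csSup hSbdd ⟨⟨hlast.1.1.trans hs.1.le, hs.2⟩, hle⟩).not_gt hs.1
  have := hdec _ t hlast.1.1 hlast.1.2 ht.2 hpos_after
  linarith [show d (sSup S) ≤ 0 from hlast.2]

namespace IsWorkloadSol

variable {K : ℕ} {D : Data K} {w w₁ w₂ : ℝ → ℝ} {a b : ℝ}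

lemma intervalIntegrable (hw : IsWorkloadSol D w) (k : Fin K) (ha : 0 ≤ a) (hab : a ≤ b) :
    IntervalIntegrable (fun s => Gk (D.Γ k) (w s)) volume a b :=
  (hw.2.1 k b (ha.trans hab)).mono_set (by
    rw [uIcc_of_le hab, uIcc_of_le (ha.trans hab)]
    exact Icc_subset_Icc ha le_rfl)

lemma sub_eq (hw : IsWorkloadSol D w) (ha : 0 ≤ a) (hab : a ≤ b) :
    w b - w a = (∑ k, D.rho k * ∫ s in a..b, Gk (D.Γ k) (w s)) - (b - a) := by
  have hsplit : ∀ k, ∫ s in (0:ℝ)..b, Gk (D.Γ k) (w s) =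
      (∫ s in (0:ℝ)..a, Gk (D.Γ k) (w s)) + ∫ s in a..b, Gk (D.Γ k) (w s) := fun k =>
    (intervalIntegral.integral_add_adjacent_intervals (hw.2.1 k a ha)
      (hw.intervalIntegrable k ha hab)).symm
  rw [hw.2.2 b (ha.trans hab), hw.2.2 a ha]
  simp only [hsplit, mul_add, Finset.sum_add_distrib]
  ring

lemma monotoneOn_add_id (hw : IsWorkloadSol D w) : MonotoneOn (fun t => w t + t) (Ici 0) := by
  intro a ha b _ hab
  have hinc : 0 ≤ ∑ k, D.rho k * ∫ s in a..b, Gk (D.Γ k) (w s) :=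
    Finset.sum_nonneg fun k _ => mul_nonneg (D.rho_nonneg k)
      (intervalIntegral.integral_nonneg hab fun _ _ => Gk_nonneg _ _)
  linarith [hw.sub_eq ha hab]

lemma continuousOn (hw : IsWorkloadSol D w) {T : ℝ} (hT : 0 ≤ T) : ContinuousOn w (Icc 0 T) := by
  have hprim : ∀ k, ContinuousOn (fun t => ∫ s in (0:ℝ)..t, Gk (D.Γ k) (w s)) (Icc 0 T) :=
    fun k => by
      simpa [uIcc_of_le hT] using
        intervalIntegral.continuousOn_primitive_interval' (hw.2.1 k T hT) left_mem_uIcc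
  refine ContinuousOn.congr ?_ fun t ht => hw.2.2 t ht.1
  exact (continuousOn_const.add
    (continuousOn_finsetSum _ fun k _ => continuousOn_const.mul (hprim k))).sub continuousOn_id

lemma le_of_apply_zero_eq (hw₁ : IsWorkloadSol D w₁) (hw₂ : IsWorkloadSol D w₂)
    (h0 : w₁ 0 = w₂ 0) {t : ℝ} (ht : 0 ≤ t) : w₁ t ≤ w₂ t := by
  suffices ∀ s ∈ Icc 0 t, w₁ s - w₂ s ≤ 0 by linarith [this t ⟨ht, le_rfl⟩]
  refine ContinuousOn.nonpos_of_le_on_pos_stretches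
    ((hw₁.continuousOn ht).sub (hw₂.continuousOn ht)) (by simp [h0]) fun a b ha hab _ hpos => ?_
  have hG : ∀ k, ∫ s in a..b, Gk (D.Γ k) (w₁ s) ≤ ∫ s in a..b, Gk (D.Γ k) (w₂ s) := fun k =>
    intervalIntegral.integral_mono_on_of_le_Ioo hab (hw₁.intervalIntegrable k ha hab)
      (hw₂.intervalIntegrable k ha hab) fun s hs =>
        Gk_antitone _ (by linarith [hpos s (Ioo_subset_Ioc_self hs)])
  have := Finset.sum_le_sum fun k (_ : k ∈ Finset.univ) =>
    mul_le_mul_of_nonneg_left (hG k) (D.rho_nonneg k)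
  linarith [hw₁.sub_eq ha hab, hw₂.sub_eq ha hab]

lemma eqOn_Ici (hw₁ : IsWorkloadSol D w₁) (hw₂ : IsWorkloadSol D w₂) (h0 : w₁ 0 = w₂ 0) :
    EqOn w₁ w₂ (Ici 0) := fun _ ht =>
  le_antisymm (hw₁.le_of_apply_zero_eq hw₂ h0 ht) (hw₂.le_of_apply_zero_eq hw₁ h0.symm ht)

end IsWorkloadSol

section tauF

variable {w : ℝ → ℝ} {s t : ℝ}

lemma bddBelow_tauF_set : BddBelow {s : ℝ | 0 ≤ s ∧ s ≤ t ∧ t ≤ w s + s} :=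
  ⟨0, fun _ hs => hs.1⟩

lemma tauF_nonneg : 0 ≤ tauF w t := Real.sInf_nonneg fun _ hs => hs.1

lemma tauF_le (ht : 0 ≤ t) (hwt : 0 ≤ w t) : tauF w t ≤ t :=
  csInf_le bddBelow_tauF_set ⟨ht, le_rfl, by linarith⟩

lemma tauF_eq_zero (ht : 0 ≤ t) (htw : t ≤ w 0) : tauF w t = 0 :=
  le_antisymm (csInf_le bddBelow_tauF_set ⟨le_rfl, ht, by simpa using htw⟩) tauF_nonneg

lemma add_lt_of_lt_tauF (hs : 0 ≤ s) (hst : s < tauF w t) (hs' : s ≤ t) : w s + s < t := by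
  by_contra! h
  exact notMem_of_lt_csInf hst bddBelow_tauF_set ⟨hs, hs', h⟩

lemma le_add_of_tauF_lt (hmono : MonotoneOn (fun s => w s + s) (Ici 0)) (ht : 0 ≤ t)
    (hwt : 0 ≤ w t) (hs : tauF w t < s) : t ≤ w s + s := by
  obtain ⟨r, hr, hrs⟩ := exists_lt_of_csInf_lt (s := {s : ℝ | 0 ≤ s ∧ s ≤ t ∧ t ≤ w s + s})
    ⟨t, ht, le_rfl, by linarith⟩ hs
  exact hr.2.2.trans (hmono hr.1 (hr.1.trans hrs.le) hrs.le)

end tauF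

abbrev Uset : Set (ℝ × ℝ) := {p : ℝ × ℝ | 0 ≤ p.1 ∧ p.1 < p.2}

lemma Uset_subset_Q : Uset ⊆ Q := fun _ hp => ⟨hp.1, hp.1.trans hp.2.le⟩

lemma measurableSet_Uset : MeasurableSet Uset :=
  (measurableSet_le measurable_const measurable_fst).inter
    (measurableSet_lt measurable_fst measurable_snd)

lemma measurableSet_Q : MeasurableSet Q :=
  (measurableSet_le measurable_const measurable_fst).inter
    (measurableSet_le measurable_const measurable_snd)

lemma measurableSet_shiftd {B : Set (ℝ × ℝ)} (hB : MeasurableSet B) (t : ℝ) :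
    MeasurableSet (shiftd B t) :=
  measurableSet_Q.inter (hB.preimage (by fun_prop))

lemma kern_shiftd_Uset_of_le (Γ : Measure ℝ) [SFinite Γ] {v r : ℝ} (hv : 0 < v) (hr : r ≤ v) :
    kern Γ v (shiftd Uset r) = Gk Γ v := by
  have hslice : Prod.mk v ⁻¹' shiftd Uset r = Ioi v := by
    ext p
    simp only [shiftd, shift, Q, mem_preimage, mem_ofPred_eq, mem_Ioi]
    constructor
    · rintro ⟨-, -, hp⟩
      linarith
    · intro hp
      exact ⟨⟨hv.le, by linarith⟩, by linarith, by linarith⟩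
  rw [kern, deltaPlus, if_pos hv, Measure.dirac_prod,
    Measure.map_apply measurable_prodMk_left (measurableSet_shiftd measurableSet_Uset r), hslice,
    Gk]

lemma kern_shiftd_Uset_of_lt (Γ : Measure ℝ) [SFinite Γ] {v r : ℝ} (h : v < r) :
    kern Γ v (shiftd Uset r) = 0 := by
  unfold kern deltaPlus
  split_ifs with hv
  · have hslice : Prod.mk v ⁻¹' shiftd Uset r = ∅ := by
      ext p
      simp only [shiftd, shift, Q, mem_preimage, mem_ofPred_eq, mem_empty_iff_false, iff_false]
      rintro ⟨-, hp, -⟩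
      linarith
    rw [Measure.dirac_prod,
      Measure.map_apply measurable_prodMk_left (measurableSet_shiftd measurableSet_Uset r),
      hslice, measure_empty, ENNReal.toReal_zero]
  · simp

lemma integral_eq_of_eqOn_zero_of_eqOn {f g : ℝ → ℝ} {a c b : ℝ} (hac : a ≤ c) (hcb : c ≤ b)
    (hg : IntervalIntegrable g volume c b) (hf0 : EqOn f 0 (Ioo a c))
    (hfg : EqOn f g (Ioo c b)) :
    ∫ x in a..b, f x = ∫ x in c..b, g x := by
  have hf₁ : IntervalIntegrable f volume a c :=
    (intervalIntegrable_const (c := (0 : ℝ))).congr_uIoo (uIoo_of_le hac ▸ hf0.symm)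
  have hf₂ : IntervalIntegrable f volume c b := hg.congr_uIoo (uIoo_of_le hcb ▸ hfg.symm)
  rw [← intervalIntegral.integral_add_adjacent_intervals hf₁ hf₂,
    intervalIntegral.integral_congr_Ioo_of_le hac hf0,
    intervalIntegral.integral_congr_Ioo_of_le hcb hfg]
  simp

lemma IsWorkloadSol.integral_kern_shiftd_Uset {K : ℕ} {D : Data K} {w : ℝ → ℝ}
    (hw : IsWorkloadSol D w) (k : Fin K) {t : ℝ} (ht : 0 ≤ t) :
    ∫ s in (0:ℝ)..t, kern (D.Γ k) (w s) (shiftd Uset (t - s)) =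
      ∫ s in tauF w t..t, Gk (D.Γ k) (w s) := by
  have hτt := tauF_le ht (hw.1 t ht)
  refine integral_eq_of_eqOn_zero_of_eqOn tauF_nonneg hτt
    (hw.intervalIntegrable k tauF_nonneg hτt) (fun s hs => ?_) (fun s hs => ?_)
  · have := add_lt_of_lt_tauF hs.1.le hs.2 (hs.2.le.trans hτt)
    exact kern_shiftd_Uset_of_lt _ (by linarith)
  · have := le_add_of_tauF_lt hw.monotoneOn_add_id ht (hw.1 t ht) hs.1
    exact kern_shiftd_Uset_of_le _ (by linarith [hs.2]) (by linarith)

lemma wMeas_nonneg {K : ℕ} (ϑ : Fin K → Measure (ℝ × ℝ)) : 0 ≤ wMeas ϑ :=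
  Real.sSup_nonneg fun _ hx => hx.1

namespace MemI

variable {K : ℕ} {D : Data K} {ϑ : Fin K → Measure (ℝ × ℝ)}

lemma measure_Ici_prod_eq_zero (hϑ : MemI D ϑ) (k : Fin K) {x : ℝ} (hx : wMeas ϑ < x) :
    ϑ k (Ici x ×ˢ Ici 0) = 0 := by
  by_contra hne
  have hsum : 0 < ∑ j, ϑ j (Ici x ×ˢ Ici 0) :=
    (pos_iff_ne_zero.2 hne).trans_le
      (Finset.single_le_sum (f := fun j => ϑ j (Ici x ×ˢ Ici 0)) (fun j _ => zero_le)
        (Finset.mem_univ k))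
  exact (le_csSup hϑ.2.2.2.1 ⟨(wMeas_nonneg ϑ).trans hx.le, hsum⟩).not_gt hx

lemma measure_Ioi_prod_eq_zero (hϑ : MemI D ϑ) (k : Fin K) {t : ℝ} (ht : wMeas ϑ ≤ t) :
    ϑ k (Ioi t ×ˢ Ici 0) = 0 := by
  have hpos : ∀ n : ℕ, t < t + 1 / ((n : ℝ) + 1) := fun n => lt_add_of_pos_right t (by positivity)
  rw [← iUnion_Ici_eq_Ioi_of_lt_of_tendsto hpos
    (by simpa using tendsto_one_div_add_atTop_nhds_zero_nat.const_add t), iUnion_prod_const]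
  exact measure_iUnion_null fun n => hϑ.measure_Ici_prod_eq_zero k (ht.trans_lt (hpos n))

lemma measure_singleton_prod_eq_zero (hϑ : MemI D ϑ) (k : Fin K) {t : ℝ} (ht : 0 ≤ t) :
    ϑ k ({t} ×ˢ Ici 0) = 0 := by
  have hcorner := Finset.sum_eq_zero_iff.1 (hϑ.2.2.1 (t, 0) ⟨ht, le_rfl⟩) k (Finset.mem_univ k)
  refine measure_mono_null (fun y hy => ?_) hcorner
  obtain ⟨hy1, hy2⟩ := hy
  exact ⟨⟨(mem_singleton_iff.1 hy1).symm ▸ ht, hy2⟩,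
    Or.inr ⟨sub_eq_zero.2 hy1, by simpa using hy2⟩⟩

lemma measure_shiftd_Uset_eq_zero (hϑ : MemI D ϑ) (k : Fin K) {t : ℝ} (ht : wMeas ϑ ≤ t) :
    ϑ k (shiftd Uset t) = 0 := by
  have hsub : shiftd Uset t ⊆ ({t} ×ˢ Ici 0) ∪ (Ioi t ×ˢ Ici 0) := by
    rintro y ⟨⟨-, hy2⟩, hy1, -⟩
    rcases (sub_nonneg.1 hy1).eq_or_lt with h | h
    · exact Or.inl ⟨h.symm, hy2⟩
    · exact Or.inr ⟨h, hy2⟩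
  exact measure_mono_null hsub (measure_union_null
    (hϑ.measure_singleton_prod_eq_zero k ((wMeas_nonneg ϑ).trans ht))
    (hϑ.measure_Ioi_prod_eq_zero k ht))

end MemI

/-- Fluid nonabandoning queue-length formula: with
`U = {(a,p) ∈ [0,∞)² : a < p}`, for each `k`, if `0 ≤ t < w(0)` then
`ζ_k(t)(U) = ϑ_k(U_t) + λ_k ∫_0^t G_k(w(v)) dv`, and if `t ≥ w(0)` then
`ζ_k(t)(U) = λ_k ∫_{τ(t)}^t G_k(w(v)) dv`. -/
theorem fluid_nonabandoning_queue_length {K : ℕ} (D : Data K)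
    (ϑ : Fin K → MeasureTheory.Measure (ℝ × ℝ)) (hϑ : MemI D ϑ)
    (ζ : ℝ → Fin K → MeasureTheory.Measure (ℝ × ℝ)) (hζ : IsFluidSol D ϑ ζ)
    (w : ℝ → ℝ) (hw : IsWorkloadSol D w) (hw0 : w 0 = wMeas ϑ) :
    ∀ k,
      (∀ t : ℝ, 0 ≤ t → t < w 0 →
        ζ t k {p : ℝ × ℝ | 0 ≤ p.1 ∧ p.1 < p.2} =
          ϑ k (shiftd {p : ℝ × ℝ | 0 ≤ p.1 ∧ p.1 < p.2} t) +
            ENNReal.ofReal (D.lam k * ∫ v in (0:ℝ)..t, Gk (D.Γ k) (w v))) ∧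
      (∀ t : ℝ, w 0 ≤ t →
        ζ t k {p : ℝ × ℝ | 0 ≤ p.1 ∧ p.1 < p.2} =
          ENNReal.ofReal (D.lam k * ∫ v in (tauF w t)..t, Gk (D.Γ k) (w v))) := by
  obtain ⟨w', hw', hw'0, -, -, hζeq⟩ := hζ
  have hww' : EqOn w w' (Ici 0) := hw.eqOn_Ici hw' (hw0.trans hw'0.symm)
  intro k
  have hζU : ∀ t, 0 ≤ t → ζ t k Uset = ϑ k (shiftd Uset t) +
      ENNReal.ofReal (D.lam k * ∫ v in tauF w t..t, Gk (D.Γ k) (w v)) := by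
    intro t ht
    have hsame : ∫ s in (0:ℝ)..t, kern (D.Γ k) (w' s) (shiftd Uset (t - s)) =
        ∫ s in (0:ℝ)..t, kern (D.Γ k) (w s) (shiftd Uset (t - s)) :=
      intervalIntegral.integral_congr fun s hs => by
        rw [uIcc_of_le ht] at hs
        rw [hww' hs.1]
    rw [(hζeq k Uset Uset_subset_Q measurableSet_Uset t ht).2, hsame,
      hw.integral_kern_shiftd_Uset k ht]
  refine ⟨fun t ht htw => ?_, fun t htw => ?_⟩
  · rw [hζU t ht, tauF_eq_zero ht htw.le]
  · rw [hζU t ((hw.1 0 le_rfl).trans htw), hϑ.measure_shiftd_Uset_eq_zero k (hw0 ▸ htw), zero_add]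

end OverloadedFIFO
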